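/- Let r ≥ 2 and let ℓ ∈ (0,∞)^r satisfy F̄_r(ℓ) = 0 and ℓⁱ = log(L) for all i ∈ [r-1] with L > 2r-3. Then ℓʳ = log((L + (2r-1))/(L - (2r-3))). -/

import Mathlib

/-!
With `aᵢ = e^{-ℓⁱ}`, expanding over subsets gives `∑_S ∏_{i∈S} aᵢ = ∏ᵢ (1 + aᵢ)` and
`∑_S |S| ∏_{i∈S} aᵢ = ∏ᵢ (1 + aᵢ) · ∑ᵢ aᵢ / (1 + aᵢ)`, so
`F̄_r(ℓ) = ∏ᵢ (1 + aᵢ) · (1 - 2 ∑ᵢ 1 / (1 + e^{ℓⁱ}))` and `F̄_r(ℓ) = 0` iff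
`∑ᵢ 1 / (1 + e^{ℓⁱ}) = 1/2`. When `r - 1` coordinates equal `log L`, this is a linear equation
for `1 / (1 + e^{ℓʳ})`.
-/

/-- `F̄_r(ℓ) = ∑_{S⊆[r]} (1-2|S|) e^{-ℓ^S}`. -/
noncomputable def Fbar (r : ℕ) (ℓ : Fin r → ℝ) : ℝ :=
  ∑ S : Finset (Fin r), (1 - 2 * (S.card : ℝ)) * Real.exp (-(∑ i ∈ S, ℓ i))

open Finset Real

theorem Finset.sum_powerset_card_mul_prod {ι K : Type*} [Field K] (s : Finset ι) (a : ι → K)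
    (ha : ∀ i ∈ s, 1 + a i ≠ 0) :
    ∑ t ∈ s.powerset, (#t : K) * ∏ i ∈ t, a i = (∏ i ∈ s, (1 + a i)) * ∑ i ∈ s, a i / (1 + a i) := by
  classical
  induction s using Finset.induction_on with
  | empty => simp
  | insert j s hj ih =>
    have hinsert : ∀ t ∈ s.powerset, (#(insert j t) : K) * ∏ i ∈ insert j t, a i
        = a j * ((#t : K) * ∏ i ∈ t, a i) + a j * ∏ i ∈ t, a i := by
      intro t ht
      have hjt : j ∉ t := fun h => hj (mem_powerset.1 ht h)
      rw [card_insert_of_notMem hjt, prod_insert hjt]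
      push_cast
      ring
    have hj' : 1 + a j ≠ 0 := ha j (mem_insert_self j s)
    rw [sum_powerset_insert hj, sum_congr rfl hinsert, sum_add_distrib, ← mul_sum, ← mul_sum,
      ← prod_one_add, ih fun i hi => ha i (mem_insert_of_mem hi), prod_insert hj, sum_insert hj]
    field_simp
    ring

theorem Fbar_eq_prod_mul (r : ℕ) (ℓ : Fin r → ℝ) :
    Fbar r ℓ = (∏ i, (1 + exp (-ℓ i))) * (1 - 2 * ∑ i, (1 + exp (ℓ i))⁻¹) := by
  have hlogistic : ∀ x : ℝ, exp (-x) / (1 + exp (-x)) = (1 + exp x)⁻¹ := by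
    intro x
    rw [exp_neg]
    field_simp
    ring
  have hterm : ∀ S : Finset (Fin r), (1 - 2 * (#S : ℝ)) * exp (-∑ i ∈ S, ℓ i)
      = ∏ i ∈ S, exp (-ℓ i) - 2 * ((#S : ℝ) * ∏ i ∈ S, exp (-ℓ i)) := by
    intro S
    rw [← sum_neg_distrib, exp_sum]
    ring
  rw [Fbar, ← powerset_univ, sum_congr rfl fun S _ => hterm S, sum_sub_distrib, ← mul_sum,
    ← prod_one_add, sum_powerset_card_mul_prod _ _ fun i _ => (by positivity)]
  simp only [hlogistic]
  ring

theorem Fbar_eq_zero_iff (r : ℕ) (ℓ : Fin r → ℝ) :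
    Fbar r ℓ = 0 ↔ ∑ i, (1 + exp (ℓ i))⁻¹ = 1 / 2 := by
  have hprod : 0 < ∏ i, (1 + exp (-ℓ i)) := prod_pos fun i _ => by positivity
  rw [Fbar_eq_prod_mul, mul_eq_zero, or_iff_right hprod.ne']
  constructor <;> intro h <;> linarith

/-- If `F̄_r(ℓ) = 0` and `ℓⁱ = log L` for all `i` with `(i:ℕ) < r - 1`, where
`L > 2r - 3`, then the last coordinate is `log((L + (2r-1))/(L - (2r-3)))`. -/
theorem Fbar_last_coordinate (r : ℕ) (hr : 2 ≤ r) (ℓ : Fin r → ℝ)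
    (hF : Fbar r ℓ = 0)
    (L : ℝ) (hL : (2 : ℝ) * r - 3 < L)
    (hℓ : ∀ i : Fin r, (i : ℕ) < r - 1 → ℓ i = Real.log L) :
    ℓ ⟨r - 1, by omega⟩ =
      Real.log ((L + (2 * r - 1)) / (L - (2 * r - 3))) := by
  have hr' : (2 : ℝ) ≤ r := by exact_mod_cast hr
  have hL0 : 0 < L := by linarith
  set last : Fin r := ⟨r - 1, by omega⟩
  have hothers : ∑ i ∈ univ.erase last, (1 + exp (ℓ i))⁻¹ = (r - 1) * (1 + L)⁻¹ := by
    have hconst : ∀ i ∈ univ.erase last, (1 + exp (ℓ i))⁻¹ = (1 + L)⁻¹ := by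
      intro i hi
      have hne : (i : ℕ) ≠ r - 1 := fun h => (mem_erase.1 hi).1 (Fin.ext h)
      rw [hℓ i (by omega), exp_log hL0]
    rw [sum_congr rfl hconst, sum_const, card_erase_of_mem (mem_univ _), card_univ,
      Fintype.card_fin, nsmul_eq_mul, Nat.cast_sub (by omega), Nat.cast_one]
  have hsum := (Fbar_eq_zero_iff r ℓ).1 hF
  rw [← add_sum_erase _ _ (mem_univ last), hothers] at hsum
  have hexp : exp (ℓ last) = (L + (2 * r - 1)) / (L - (2 * r - 3)) := by
    rw [eq_div_iff (by linarith)]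
    field_simp at hsum
    linear_combination -hsum
  rw [← hexp, log_exp]
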